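/- Let O be a valuation ring with fraction field L, X and Y schemes with a proper morphism f : Y → X, and suppose given a morphism i : Spec O → X and a lift k : Spec L → Y of the restriction of i to the generic point. Then there exists a unique morphism i′ : Spec O → Y with f ∘ i′ = i and i′|_{Spec L} = k. -/

import Mathlib

open AlgebraicGeometry CategoryTheory

lemma CategoryTheory.CommSq.existsUnique_lift {C : Type*} [Category C] {A B X Y : C}
    {f : A ⟶ X} {i : A ⟶ B} {p : X ⟶ Y} {g : B ⟶ Y} {sq : CommSq f i p g}
    (h : Nonempty (Unique sq.LiftStruct)) : ∃! l : B ⟶ X, l ≫ p = g ∧ i ≫ l = f := by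
  obtain ⟨u⟩ := h
  refine ⟨u.default.l, ⟨u.default.fac_right, u.default.fac_left⟩, ?_⟩
  rintro l ⟨hl_right, hl_left⟩
  exact congrArg CommSq.LiftStruct.l (u.uniq ⟨l, hl_left, hl_right⟩)

lemma AlgebraicGeometry.IsProper.valuativeCriterion {X Y : Scheme} (f : X ⟶ Y) [IsProper f] :
    ValuativeCriterion f := by
  have h : IsProper f := inferInstance
  rw [IsProper.eq_valuativeCriterion] at h
  exact h.1.1.1

theorem valuative_criterion_proper_lift
    {X Y : Scheme} (f : Y ⟶ X) [IsProper f]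
    (O : Type) [CommRing O] [IsDomain O] [ValuationRing O]
    (L : Type) [Field L] [Algebra O L] [IsFractionRing O L]
    (i : Spec (CommRingCat.of O) ⟶ X) (k : Spec (CommRingCat.of L) ⟶ Y)
    (hsq : Spec.map (CommRingCat.ofHom (algebraMap O L)) ≫ i = k ≫ f) :
    ∃! i' : Spec (CommRingCat.of O) ⟶ Y,
      i' ≫ f = i ∧ Spec.map (CommRingCat.ofHom (algebraMap O L)) ≫ i' = k :=
  CommSq.existsUnique_lift
    (IsProper.valuativeCriterion f ⟨O, L, k, i, ⟨hsq.symm⟩⟩)
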